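/- Let μ = 0 and λ = 1. For any e ∈ ℂ, the ℂ-linear map ψ_e on 𝓛 defined by ψ_e(Lₙ) = Lₙ, ψ_e(Yₙ) = Yₙ + e·Mₙ, ψ_e(Mₙ) = Mₙ is a Lie algebra automorphism, and ψ_e ∘ ψ_{e'} = ψ_{e+e'}, so {ψ_e : e ∈ ℂ} is a subgroup of Aut 𝓛 isomorphic to (ℂ, +). -/

import Mathlib

/-!
The map `D` with `D Yₙ = Mₙ` and `D Lₙ = D Mₙ = 0` is a derivation of `𝓛` with `D² = 0`, as one
checks on pairs of basis vectors. Hence `ψ_e = exp (e • D) = 1 + e • D` is an automorphism, and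
`(1 + e • D) ∘ (1 + e' • D) = 1 + (e + e') • D` because `D² = 0`. The family is injective because
`D ≠ 0`.
-/

open Submodule

namespace LieDerivation

variable {R L : Type*} [CommRing R] [LieRing L] [LieAlgebra R L]

section OfSpan

variable {M : Type*} [AddCommGroup M] [Module R M] [LieRingModule L M] [LieModule R L M]
  (D : L →ₗ[R] M) {s : Set L} (hs : span R s = ⊤)
  (h : ∀ x ∈ s, ∀ y ∈ s, D ⁅x, y⁆ = ⁅x, D y⁆ - ⁅y, D x⁆)

def ofSpanEqTop : LieDerivation R L M where
  toLinearMap := D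
  leibniz' x y := by
    let F : L →ₗ[R] L →ₗ[R] M := LinearMap.mk₂ R (fun x y => D ⁅x, y⁆)
      (fun _ _ _ => by simp only [add_lie, map_add])
      (fun _ _ _ => by simp only [smul_lie, map_smul])
      (fun _ _ _ => by simp only [lie_add, map_add])
      (fun _ _ _ => by simp only [lie_smul, map_smul])
    let G : L →ₗ[R] L →ₗ[R] M := LinearMap.mk₂ R (fun x y => ⁅x, D y⁆ - ⁅y, D x⁆)
      (fun _ _ _ => by simp only [add_lie, lie_add, map_add]; abel)
      (fun _ _ _ => by simp only [smul_lie, lie_smul, map_smul, smul_sub])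
      (fun _ _ _ => by simp only [add_lie, lie_add, map_add]; abel)
      (fun _ _ _ => by simp only [smul_lie, lie_smul, map_smul, smul_sub])
    have hFG : F = G := LinearMap.ext_on hs fun x hx => LinearMap.ext_on hs fun y hy => h x hx y hy
    exact LinearMap.congr_fun₂ hFG x y

@[simp]
theorem ofSpanEqTop_apply (x : L) : ofSpanEqTop D hs h x = D x :=
  rfl

end OfSpan

theorem sq_smul_toLinearMap_eq_zero {D : LieDerivation R L L} (hD : D.toLinearMap ^ 2 = 0)
    (t : R) : (t • D).toLinearMap ^ 2 = 0 := by
  rw [coe_smul_linearMap, smul_pow, hD, smul_zero]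

variable [LieAlgebra ℚ L] (D : LieDerivation R L L) (hD : D.toLinearMap ^ 2 = 0)

noncomputable def expSmul (t : R) : L ≃ₗ⁅R⁆ L :=
  exp (t • D) (.mk _ 2 (sq_smul_toLinearMap_eq_zero hD t))

theorem expSmul_apply (t : R) (x : L) : D.expSmul hD t x = x + t • D x := by
  rw [expSmul, exp_map_apply, IsNilpotent.exp_eq_sum (sq_smul_toLinearMap_eq_zero hD t)]
  simp [Finset.sum_range_succ]

theorem expSmul_add_apply (s t : R) (x : L) :
    D.expSmul hD (s + t) x = D.expSmul hD s (D.expSmul hD t x) := by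
  have hDD : D (D x) = 0 := by simpa [sq] using LinearMap.congr_fun hD x
  simp only [expSmul_apply, map_add, map_smul, hDD, smul_zero, add_zero, add_smul]
  abel

theorem expSmul_injective [IsDomain R] [Module.IsTorsionFree R L] (hD0 : D ≠ 0) :
    Function.Injective (D.expSmul hD) := by
  intro s t hst
  obtain ⟨x, hx⟩ : ∃ x, D x ≠ 0 := by
    by_contra! h
    exact hD0 (ext h)
  have := DFunLike.congr_fun hst x
  rw [expSmul_apply, expSmul_apply, add_right_inj] at this
  have hsub : (s - t) • D x = 0 := by rw [sub_smul, this, sub_self]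
  exact sub_eq_zero.mp ((smul_eq_zero.mp hsub).resolve_right hx)

end LieDerivation

theorem exists_linearMap_apply_of_linearIndependent {R V N ι : Type*} [CommRing R]
    [AddCommGroup V] [Module R V] [AddCommGroup N] [Module R N] {a b c : ι → V}
    (hind : LinearIndependent R (fun p : ι × Fin 3 =>
      if p.2 = 0 then a p.1 else if p.2 = 1 then b p.1 else c p.1))
    (hspan : span R (Set.range a ∪ Set.range b ∪ Set.range c) = ⊤) (f g h : ι → N) :
    ∃ D : V →ₗ[R] N, (∀ i, D (a i) = f i) ∧ (∀ i, D (b i) = g i) ∧ ∀ i, D (c i) = h i := by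
  have hle : Set.range a ∪ Set.range b ∪ Set.range c ⊆ Set.range (fun p : ι × Fin 3 =>
      if p.2 = 0 then a p.1 else if p.2 = 1 then b p.1 else c p.1) := by
    rintro _ ((⟨i, rfl⟩ | ⟨i, rfl⟩) | ⟨i, rfl⟩)
    exacts [⟨(i, 0), by simp⟩, ⟨(i, 1), by simp⟩, ⟨(i, 2), by simp⟩]
  let B := Module.Basis.mk hind (hspan ▸ span_mono hle).ge
  have hB (p : ι × Fin 3) := B.constr_basis R
    (fun p => if p.2 = 0 then f p.1 else if p.2 = 1 then g p.1 else h p.1) p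
  simp only [B, Module.Basis.mk_apply] at hB
  exact ⟨_, fun i => by simpa using hB (i, 0), fun i => by simpa using hB (i, 1),
    fun i => by simpa using hB (i, 2)⟩

section

variable {R 𝓛 : Type*} [CommRing R] [LieRing 𝓛] [LieAlgebra R 𝓛] {L Y M : ℤ → 𝓛}

theorem leibniz_on_generators
    (hLL : ∀ n m : ℤ, ⁅L n, L m⁆ = ((m : R) - (n : R)) • L (n + m))
    (hLY : ∀ n m : ℤ, ⁅L n, Y m⁆ = ((m : R) - (n : R)) • Y (n + m))
    (hYY : ∀ n m : ℤ, ⁅Y n, Y m⁆ = ((m : R) - (n : R)) • M (n + m))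
    (hLM : ∀ n m : ℤ, ⁅L n, M m⁆ = ((m : R) - (n : R)) • M (n + m))
    (hYM : ∀ n m : ℤ, ⁅Y n, M m⁆ = 0)
    (hMM : ∀ n m : ℤ, ⁅M n, M m⁆ = 0)
    {D : 𝓛 →ₗ[R] 𝓛} (hDL : ∀ n, D (L n) = 0) (hDY : ∀ n, D (Y n) = M n)
    (hDM : ∀ n, D (M n) = 0) :
    ∀ x ∈ Set.range L ∪ Set.range Y ∪ Set.range M, ∀ y ∈ Set.range L ∪ Set.range Y ∪ Set.range M,
      D ⁅x, y⁆ = ⁅x, D y⁆ - ⁅y, D x⁆ := by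
  rintro _ ((⟨n, rfl⟩ | ⟨n, rfl⟩) | ⟨n, rfl⟩) _ ((⟨m, rfl⟩ | ⟨m, rfl⟩) | ⟨m, rfl⟩)
  -- the pairs `(Y, L)`, `(M, L)`, `(M, Y)` are first reversed by skew-symmetry
  all_goals
    first
    | simp [hLL, hLY, hYY, hLM, hYM, hMM, hDL, hDY, hDM]; done
    | rw [← lie_skew]; simp [hLY, hLM, hYM, hMM, hDL, hDY, hDM]

theorem exists_lieDerivation_sq_eq_zero
    (hspan : span R (Set.range L ∪ Set.range Y ∪ Set.range M) = ⊤)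
    (hind : LinearIndependent R (fun p : ℤ × Fin 3 =>
      if p.2 = 0 then L p.1 else if p.2 = 1 then Y p.1 else M p.1))
    (hLL : ∀ n m : ℤ, ⁅L n, L m⁆ = ((m : R) - (n : R)) • L (n + m))
    (hLY : ∀ n m : ℤ, ⁅L n, Y m⁆ = ((m : R) - (n : R)) • Y (n + m))
    (hYY : ∀ n m : ℤ, ⁅Y n, Y m⁆ = ((m : R) - (n : R)) • M (n + m))
    (hLM : ∀ n m : ℤ, ⁅L n, M m⁆ = ((m : R) - (n : R)) • M (n + m))
    (hYM : ∀ n m : ℤ, ⁅Y n, M m⁆ = 0)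
    (hMM : ∀ n m : ℤ, ⁅M n, M m⁆ = 0) :
    ∃ D : LieDerivation R 𝓛 𝓛, D.toLinearMap ^ 2 = 0 ∧
      (∀ n, D (L n) = 0) ∧ (∀ n, D (Y n) = M n) ∧ ∀ n, D (M n) = 0 := by
  obtain ⟨D, hDL, hDY, hDM⟩ :=
    exists_linearMap_apply_of_linearIndependent hind hspan (fun _ => 0) M (fun _ => 0)
  refine ⟨.ofSpanEqTop D hspan (leibniz_on_generators hLL hLY hYY hLM hYM hMM hDL hDY hDM),
    LinearMap.ext_on hspan ?_, hDL, hDY, hDM⟩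
  rintro _ ((⟨n, rfl⟩ | ⟨n, rfl⟩) | ⟨n, rfl⟩) <;> simp [sq, hDL, hDY, hDM]

end

theorem stmt_18 (𝓛 : Type*) [LieRing 𝓛] [LieAlgebra ℂ 𝓛]
    (L Y M : ℤ → 𝓛)
    (hspan : Submodule.span ℂ (Set.range L ∪ Set.range Y ∪ Set.range M) = ⊤)
    (hind : LinearIndependent ℂ (fun p : ℤ × Fin 3 =>
      if p.2 = 0 then L p.1 else if p.2 = 1 then Y p.1 else M p.1))
    (hLL : ∀ n m : ℤ, ⁅L n, L m⁆ = ((m : ℂ) - (n : ℂ)) • L (n + m))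
    (hLY : ∀ n m : ℤ, ⁅L n, Y m⁆ = ((m : ℂ) - (n : ℂ)) • Y (n + m))
    (hYY : ∀ n m : ℤ, ⁅Y n, Y m⁆ = ((m : ℂ) - (n : ℂ)) • M (n + m))
    (hLM : ∀ n m : ℤ, ⁅L n, M m⁆ = ((m : ℂ) - (n : ℂ)) • M (n + m))
    (hYM : ∀ n m : ℤ, ⁅Y n, M m⁆ = 0)
    (hMM : ∀ n m : ℤ, ⁅M n, M m⁆ = 0) :
    ∃ ψ : ℂ → (𝓛 ≃ₗ[ℂ] 𝓛),
      Function.Injective ψ ∧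
      (∀ e e' : ℂ, ∀ x : 𝓛, ψ (e + e') x = ψ e (ψ e' x)) ∧
      ∀ e : ℂ,
        (∀ x y : 𝓛, ψ e ⁅x, y⁆ = ⁅ψ e x, ψ e y⁆) ∧
        (∀ n : ℤ, ψ e (L n) = L n) ∧
        (∀ n : ℤ, ψ e (Y n) = Y n + e • M n) ∧
        (∀ n : ℤ, ψ e (M n) = M n) := by
  -- `LieDerivation.exp` needs `𝓛` as a Lie algebra over `ℚ ⊆ ℂ`
  let _ : Module ℚ 𝓛 := Module.compHom 𝓛 (algebraMap ℚ ℂ)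
  let _ : LieAlgebra ℚ 𝓛 := { lie_smul := fun t x y => lie_smul (algebraMap ℚ ℂ t) x y }
  obtain ⟨D, hD, hDL, hDY, hDM⟩ :=
    exists_lieDerivation_sq_eq_zero hspan hind hLL hLY hYY hLM hYM hMM
  have hD0 : D ≠ 0 := fun h => by
    simpa [← hDY 0, h] using hind.ne_zero ((0 : ℤ), (2 : Fin 3))
  refine ⟨fun e => (D.expSmul hD e).toLinearEquiv,
    LieEquiv.toLinearEquiv_injective.comp (D.expSmul_injective hD hD0),
    D.expSmul_add_apply hD, fun e => ⟨(D.expSmul hD e).map_lie, fun n => ?_, fun n => ?_,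
    fun n => ?_⟩⟩ <;>
  simp [LieDerivation.expSmul_apply, hDL, hDY, hDM]
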